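/- For all real λ > 0, β > 0, t ≥ 0, every integer n ≥ 1 and every integer p ≥ 1, ∫₀^∞ s^p · λ e^{-β t - λ s} Σ_{k=1}^{n} (β t)^{k-1} Φ(n, k, λ s (β t)^n) ds = e^{-β t} · (p!/λ^p) · Σ_{k=1}^{n} (β t)^{k-1} E^{p+1}_{n,k}((β t)^n). -/

import Mathlib

/-!
Expanding the Wright function into its power series in `s`, each term is a monomial
`s ^ (p + j) * exp (-(λ * s))`, whose integral over `(0, ∞)` is the Gamma integral
`(p + j)! / λ ^ (p + j + 1)`. These integrals are absolutely summable because
`(p + j)! ≤ 2 ^ (p + j) * p! * j!` and `Γ(n j + k) ≥ j!`, so integration and summation commute,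
and `(p + j)! / p! = Γ(p + 1 + j) / Γ(p + 1)` turns the resulting series into `E^{p+1}_{n,k}`.
-/

open Real MeasureTheory Filter Finset

/-- Wright function `Φ(ρ, δ, z) = Σ_{j≥0} z^j / (j! Γ(ρ j + δ))`. -/
noncomputable def wright (ρ δ z : ℝ) : ℝ :=
  ∑' j : ℕ, z ^ j / ((Nat.factorial j : ℝ) * Real.Gamma (ρ * (j : ℝ) + δ))

/-- Wright function with second parameter 0:
`Φ(ρ, 0, z) = Σ_{j≥1} z^j / (j! Γ(ρ j))`. -/
noncomputable def wright0 (ρ z : ℝ) : ℝ :=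
  ∑' j : ℕ, z ^ (j + 1) /
    ((Nat.factorial (j + 1) : ℝ) * Real.Gamma (ρ * ((j : ℝ) + 1)))

/-- Two-parameter Mittag-Leffler function `E_{ρ,δ}(z) = Σ_{j≥0} z^j / Γ(ρ j + δ)`. -/
noncomputable def ml2 (ρ δ z : ℝ) : ℝ :=
  ∑' j : ℕ, z ^ j / Real.Gamma (ρ * (j : ℝ) + δ)

/-- Three-parameter generalized Mittag-Leffler function
`E^γ_{ρ,δ}(z) = Σ_{j≥0} (Γ(γ+j)/Γ(γ)) z^j / (j! Γ(ρ j + δ))`. -/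
noncomputable def ml3 (γ ρ δ z : ℝ) : ℝ :=
  ∑' j : ℕ, (Real.Gamma (γ + (j : ℝ)) / Real.Gamma γ) * z ^ j /
    ((Nat.factorial j : ℝ) * Real.Gamma (ρ * (j : ℝ) + δ))

/-- Modified Bessel function of the first kind of order 0:
`I₀(z) = Σ_{j≥0} (z/2)^{2j} / (j!)²`. -/
noncomputable def besselI0 (z : ℝ) : ℝ :=
  ∑' j : ℕ, (z / 2) ^ (2 * j) / ((Nat.factorial j : ℝ) * (Nat.factorial j : ℝ))

open scoped Nat

theorem integrable_tsum_of_summable_integral_norm {ι α E : Type*} [Countable ι]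
    [MeasurableSpace α] {μ : Measure α} [NormedAddCommGroup E] [CompleteSpace E]
    [MeasurableSpace E] [BorelSpace E] [SecondCountableTopology E] {F : ι → α → E}
    (hF_int : ∀ i, Integrable (F i) μ) (hF_sum : Summable fun i ↦ ∫ a, ‖F i a‖ ∂μ) :
    Integrable (fun a ↦ ∑' i, F i a) μ := by
  refine ⟨(AEMeasurable.tsum fun i ↦ (hF_int i).aemeasurable).aestronglyMeasurable, ?_⟩
  calc ∫⁻ a, ‖∑' i, F i a‖ₑ ∂μ ≤ ∫⁻ a, ∑' i, ‖F i a‖ₑ ∂μ :=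
        lintegral_mono fun a ↦ enorm_tsum_le_tsum_enorm
    _ = ∑' i, ∫⁻ a, ‖F i a‖ₑ ∂μ :=
        lintegral_tsum fun i ↦ (hF_int i).aemeasurable.enorm
    _ = ∑' i, ENNReal.ofReal (∫ a, ‖F i a‖ ∂μ) := by
        simp_rw [ofReal_integral_norm_eq_lintegral_enorm (hF_int _)]
    _ = ENNReal.ofReal (∑' i, ∫ a, ‖F i a‖ ∂μ) := (ENNReal.ofReal_tsum_of_nonneg
          (fun i ↦ integral_nonneg fun a ↦ norm_nonneg _) hF_sum).symm
    _ < ⊤ := ENNReal.ofReal_lt_top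

theorem integral_pow_mul_exp_neg_mul_Ioi (m : ℕ) {b : ℝ} (hb : 0 < b) :
    ∫ s in Set.Ioi (0 : ℝ), s ^ m * exp (-(b * s)) = m ! / b ^ (m + 1) := by
  have h := Real.integral_rpow_mul_exp_neg_mul_Ioi (a := m + 1) (by positivity) hb
  simp only [add_sub_cancel_right, Real.rpow_natCast, Real.Gamma_nat_eq_factorial] at h
  rw [h, ← Nat.cast_succ, Real.rpow_natCast, one_div, inv_pow, inv_mul_eq_div]

theorem integrableOn_pow_mul_exp_neg_mul_Ioi (m : ℕ) {b : ℝ} (hb : 0 < b) :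
    IntegrableOn (fun s : ℝ ↦ s ^ m * exp (-(b * s))) (Set.Ioi 0) := by
  simpa [Real.rpow_natCast, neg_mul] using
    integrableOn_rpow_mul_exp_neg_mul_rpow (s := m) (p := 1)
      (by linarith [m.cast_nonneg (α := ℝ)]) zero_lt_one hb

theorem integral_norm_mul_pow_mul_exp_neg_mul_Ioi (c : ℝ) (m : ℕ) {b : ℝ} (hb : 0 < b) :
    ∫ s in Set.Ioi (0 : ℝ), ‖c * (s ^ m * exp (-(b * s)))‖ = |c| * (m ! / b ^ (m + 1)) := by
  rw [← integral_pow_mul_exp_neg_mul_Ioi m hb, ← integral_const_mul]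
  refine setIntegral_congr_fun measurableSet_Ioi fun s hs ↦ ?_
  rw [norm_mul, Real.norm_eq_abs, Real.norm_of_nonneg (by have : 0 < s := hs; positivity)]

section LaplaceSeries

variable {ι : Type*} [Countable ι] {b : ℝ} {a : ι → ℝ} {e : ι → ℕ}

theorem integrableOn_tsum_mul_pow_mul_exp_neg_mul (hb : 0 < b)
    (ha : Summable fun i ↦ |a i| * ((e i)! / b ^ (e i + 1))) :
    IntegrableOn (fun s ↦ ∑' i, a i * (s ^ e i * exp (-(b * s)))) (Set.Ioi 0) :=
  integrable_tsum_of_summable_integral_norm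
    (fun i ↦ (integrableOn_pow_mul_exp_neg_mul_Ioi (e i) hb).const_mul (a i))
    (by simpa only [integral_norm_mul_pow_mul_exp_neg_mul_Ioi _ _ hb] using ha)

theorem integral_tsum_mul_pow_mul_exp_neg_mul (hb : 0 < b)
    (ha : Summable fun i ↦ |a i| * ((e i)! / b ^ (e i + 1))) :
    ∫ s in Set.Ioi (0 : ℝ), ∑' i, a i * (s ^ e i * exp (-(b * s)))
      = ∑' i, a i * ((e i)! / b ^ (e i + 1)) := by
  rw [← integral_tsum_of_summable_integral_norm
    (fun i ↦ (integrableOn_pow_mul_exp_neg_mul_Ioi (e i) hb).const_mul (a i))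
    (by simpa only [integral_norm_mul_pow_mul_exp_neg_mul_Ioi _ _ hb] using ha)]
  simp_rw [integral_const_mul, integral_pow_mul_exp_neg_mul_Ioi _ hb]

end LaplaceSeries

theorem Nat.factorial_add_le_two_pow_mul (p j : ℕ) : (p + j)! ≤ 2 ^ (p + j) * p ! * j ! :=
  calc (p + j)! = (p + j).choose j * p ! * j ! :=
        (Nat.add_choose_mul_factorial_mul_factorial p j).symm
    _ ≤ 2 ^ (p + j) * p ! * j ! := by gcongr; exact Nat.choose_le_two_pow _ _

theorem factorial_le_Gamma_natCast_mul_add {n k : ℕ} (hn : 1 ≤ n) (hk : 1 ≤ k) (j : ℕ) :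
    (j ! : ℝ) ≤ Gamma (n * j + k) := by
  have hj : j ≤ n * j + k - 1 := by have := Nat.le_mul_of_pos_left j hn; omega
  have hcast : (n * j + k : ℝ) = ((n * j + k - 1 : ℕ) : ℝ) + 1 := by
    rw [Nat.cast_sub (by omega)]; push_cast; ring
  rw [hcast, Real.Gamma_nat_eq_factorial]
  exact_mod_cast Nat.factorial_le hj

theorem summable_factorial_add_mul_pow_div_mul_Gamma {n k : ℕ} (hn : 1 ≤ n) (hk : 1 ≤ k)
    (p : ℕ) {x : ℝ} (hx : 0 ≤ x) :
    Summable fun j : ℕ ↦ ((p + j)! : ℝ) * x ^ j / (j ! * Gamma (n * j + k)) := by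
  refine .of_nonneg_of_le (fun j ↦ ?_) (fun j ↦ ?_)
    ((Real.summable_pow_div_factorial (2 * x)).mul_left ((2 : ℝ) ^ p * p !))
  · have := Real.Gamma_pos_of_pos (show (0 : ℝ) < n * j + k by positivity)
    positivity
  · have hΓ := factorial_le_Gamma_natCast_mul_add hn hk j
    have hfac : ((p + j)! : ℝ) ≤ 2 ^ (p + j) * p ! * j ! := by
      exact_mod_cast Nat.factorial_add_le_two_pow_mul p j
    calc ((p + j)! : ℝ) * x ^ j / (j ! * Gamma (n * j + k))
        ≤ 2 ^ (p + j) * p ! * j ! * x ^ j / (j ! * j !) := by gcongr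
      _ = 2 ^ p * p ! * ((2 * x) ^ j / j !) := by field_simp; ring

theorem pow_mul_exp_mul_wright_eq_tsum (lam ρ δ w s : ℝ) (p : ℕ) :
    s ^ p * (lam * exp (-(lam * s)) * wright ρ δ (lam * s * w))
      = ∑' j : ℕ, lam ^ (j + 1) * w ^ j / (j ! * Gamma (ρ * j + δ)) *
          (s ^ (p + j) * exp (-(lam * s))) := by
  rw [wright, ← tsum_mul_left, ← tsum_mul_left]
  congr 1 with j
  ring

theorem summable_abs_wright_coeff_mul {lam : ℝ} (hlam : 0 < lam) {n k : ℕ} (hn : 1 ≤ n)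
    (hk : 1 ≤ k) (p : ℕ) (w : ℝ) :
    Summable fun j : ℕ ↦ |lam ^ (j + 1) * w ^ j / (j ! * Gamma (n * j + k))| *
      ((p + j)! / lam ^ (p + j + 1)) := by
  refine ((summable_factorial_add_mul_pow_div_mul_Gamma hn hk p (abs_nonneg w)).div_const
    (lam ^ p)).congr fun j ↦ ?_
  have hΓ := Real.Gamma_pos_of_pos (show (0 : ℝ) < n * j + k by positivity)
  rw [abs_div, abs_mul, abs_mul, abs_pow, abs_pow, abs_of_pos hlam, abs_of_pos hΓ,
    Nat.abs_cast]
  field_simp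
  ring

theorem integrableOn_pow_mul_exp_mul_wright {lam : ℝ} (hlam : 0 < lam) {n k : ℕ} (hn : 1 ≤ n)
    (hk : 1 ≤ k) (p : ℕ) (w : ℝ) :
    IntegrableOn (fun s ↦ s ^ p * (lam * exp (-(lam * s)) * wright n k (lam * s * w)))
      (Set.Ioi 0) := by
  simpa only [pow_mul_exp_mul_wright_eq_tsum] using integrableOn_tsum_mul_pow_mul_exp_neg_mul hlam
    (summable_abs_wright_coeff_mul hlam hn hk p w)

theorem integral_pow_mul_exp_mul_wright {lam : ℝ} (hlam : 0 < lam) {n k : ℕ} (hn : 1 ≤ n)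
    (hk : 1 ≤ k) (p : ℕ) (w : ℝ) :
    ∫ s in Set.Ioi (0 : ℝ), s ^ p * (lam * exp (-(lam * s)) * wright n k (lam * s * w))
      = p ! / lam ^ p * ml3 (p + 1) n k w := by
  simp_rw [pow_mul_exp_mul_wright_eq_tsum]
  rw [integral_tsum_mul_pow_mul_exp_neg_mul hlam
    (summable_abs_wright_coeff_mul hlam hn hk p w), ml3, ← tsum_mul_left]
  congr 1 with j
  have hΓ : Gamma ((p : ℝ) + 1 + j) = (p + j)! := by
    rw [← Real.Gamma_nat_eq_factorial]; push_cast; ring_nf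
  rw [hΓ, Real.Gamma_nat_eq_factorial]
  field_simp
  ring

theorem stmt17_general (lam β t : ℝ) (hlam : 0 < lam)
    (n : ℕ) (hn : 1 ≤ n) (p : ℕ) :
    (∫ s in Set.Ioi (0 : ℝ),
      s ^ p *
        (lam * Real.exp (-(β * t) - lam * s) *
          ∑ k ∈ Finset.Icc 1 n,
            (β * t) ^ (k - 1) * wright (n : ℝ) (k : ℝ) (lam * s * (β * t) ^ n)))
    = Real.exp (-(β * t)) * ((Nat.factorial p : ℝ) / lam ^ p) *
        ∑ k ∈ Finset.Icc 1 n,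
          (β * t) ^ (k - 1) * ml3 ((p : ℝ) + 1) (n : ℝ) (k : ℝ) ((β * t) ^ n) := by
  have hsplit : ∀ s : ℝ, s ^ p * (lam * exp (-(β * t) - lam * s) *
      ∑ k ∈ Icc 1 n, (β * t) ^ (k - 1) * wright n k (lam * s * (β * t) ^ n))
      = ∑ k ∈ Icc 1 n, exp (-(β * t)) * (β * t) ^ (k - 1) *
          (s ^ p * (lam * exp (-(lam * s)) * wright n k (lam * s * (β * t) ^ n))) := by
    intro s
    rw [sub_eq_add_neg, exp_add, mul_sum, mul_sum]
    exact sum_congr rfl fun k _ ↦ by ring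
  simp_rw [hsplit]
  rw [integral_finsetSum _ fun k hk ↦
    (integrableOn_pow_mul_exp_mul_wright hlam hn (mem_Icc.1 hk).1 p _).const_mul _, mul_sum]
  refine sum_congr rfl fun k hk ↦ ?_
  rw [integral_const_mul, integral_pow_mul_exp_mul_wright hlam hn (mem_Icc.1 hk).1]
  ring

/-- `p`-th moment of the inverse compound Poisson–Erlang
process `Y^{(n)}(t)`. -/
theorem stmt17 (lam β t : ℝ) (hlam : 0 < lam) (hβ : 0 < β) (ht : 0 ≤ t)
    (n : ℕ) (hn : 1 ≤ n) (p : ℕ) (hp : 1 ≤ p) :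
    (∫ s in Set.Ioi (0 : ℝ),
      s ^ p *
        (lam * Real.exp (-(β * t) - lam * s) *
          ∑ k ∈ Finset.Icc 1 n,
            (β * t) ^ (k - 1) * wright (n : ℝ) (k : ℝ) (lam * s * (β * t) ^ n)))
    = Real.exp (-(β * t)) * ((Nat.factorial p : ℝ) / lam ^ p) *
        ∑ k ∈ Finset.Icc 1 n,
          (β * t) ^ (k - 1) * ml3 ((p : ℝ) + 1) (n : ℝ) (k : ℝ) ((β * t) ^ n) :=
  stmt17_general lam β t hlam n hn p
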